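/- A function f: F_2^n → {0,1} is ε-far from odd-cycle-free if and only if f̂(β) ≥ −ρ + 2ε for every β ∈ F_2^n, where ρ is the density of f. -/

import Mathlib

open Finset
open scoped Classical

abbrev V (n : ℕ) : Type := Fin n → ZMod 2

def dotp {n : ℕ} (α x : V n) : ZMod 2 := ∑ i, α i * x i

def IsBool {n : ℕ} (f : V n → ℝ) : Prop := ∀ x, f x = 0 ∨ f x = 1

/-- `f` is odd-cycle-free: no odd `k` and `x_1,…,x_k` in the support summing to `0`. -/
def OCF {n : ℕ} (f : V n → ℝ) : Prop :=
  ∀ k : ℕ, Odd k → ¬ ∃ x : Fin k → V n, (∀ i, f (x i) = 1) ∧ (∑ i, x i) = 0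

noncomputable def fhat {n : ℕ} (f : V n → ℝ) (α : V n) : ℝ :=
  (∑ x : V n, f x * (-1 : ℝ) ^ (dotp α x).val) / 2 ^ n

/-- `f` is `ε`-far from odd-cycle-free: every Boolean OCF function differs from `f`
on at least `ε·2^n` points. -/
def FarFromOCF {n : ℕ} (ε : ℝ) (f : V n → ℝ) : Prop :=
  ∀ g : V n → ℝ, IsBool g → OCF g →
    ε * 2 ^ n ≤ ((Finset.univ.filter fun x => f x ≠ g x).card : ℝ)


/-! The support of a Boolean `f` is odd-cycle-free exactly when it lies in an affine hyperplane
`{x | β · x = 1}`: odd sums from such a set are nonzero, and conversely if no odd sum from `S ∋ s₀`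
vanishes, then `s₀` avoids the span of the even sums, so a functional equal to `1` on `s₀` and `0`
on that span is `1` on all of `S`. Hence the nearest odd-cycle-free function to `f` is the
restriction of `f` to the best hyperplane, at distance `#{x ∈ supp f | β · x = 0}`, and this count
is `2^n (f̂(β) + f̂(0)) / 2` because `f̂(β) + f̂(0)` averages `f(x)(1 + (-1)^{β · x})`. -/

lemma zmod_two_eq_zero_or_one (a : ZMod 2) : a = 0 ∨ a = 1 := by
  revert a; decide

section OddSums

variable {M : Type*} [AddCommGroup M] [Module (ZMod 2) M]

lemma exists_even_sum_eq_of_mem_span {S : Set M} {s₀ : M}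
    {w : M} (hw : w ∈ Submodule.span (ZMod 2) ((s₀ + ·) '' S)) (hs₀ : s₀ ∈ S) :
    ∃ (k : ℕ) (x : Fin k → M), Even k ∧ (∀ i, x i ∈ S) ∧ ∑ i, x i = w := by
  induction hw using Submodule.span_induction with
  | mem v hv =>
    obtain ⟨s, hs, rfl⟩ := hv
    exact ⟨2, ![s₀, s], even_two, fun i => by fin_cases i <;> simpa, by simp⟩
  | zero => exact ⟨0, ![], .zero, fun i => i.elim0, by simp⟩
  | add u v _ _ hu hv =>
    obtain ⟨k, x, hk, hxS, rfl⟩ := hu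
    obtain ⟨l, y, hl, hyS, rfl⟩ := hv
    refine ⟨k + l, Fin.append x y, hk.add hl, fun i => ?_, by simp [Fin.sum_univ_add]⟩
    refine Fin.addCases (fun j => ?_) (fun j => ?_) i <;> simp [hxS, hyS]
  | smul c v _ hv =>
    rcases zmod_two_eq_zero_or_one c with rfl | rfl
    · exact ⟨0, ![], .zero, fun i => i.elim0, by simp⟩
    · simpa using hv

theorem odd_sum_ne_zero_iff_exists_dual_eq_one (S : Set M) :
    (∀ k, Odd k → ∀ x : Fin k → M, (∀ i, x i ∈ S) → ∑ i, x i ≠ 0) ↔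
      ∃ φ : Module.Dual (ZMod 2) M, ∀ s ∈ S, φ s = 1 := by
  constructor
  · intro hS
    rcases S.eq_empty_or_nonempty with rfl | ⟨s₀, hs₀⟩
    · exact ⟨0, by simp⟩
    set W := Submodule.span (ZMod 2) ((s₀ + ·) '' S)
    have hs₀W : s₀ ∉ W := fun h => by
      obtain ⟨k, x, hk, hxS, hx⟩ := exists_even_sum_eq_of_mem_span h hs₀
      refine hS (k + 1) hk.add_one (Fin.cons s₀ x) (Fin.cases hs₀ hxS) ?_
      rw [Fin.sum_univ_succ]
      simp [hx, ZModModule.add_self]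
    obtain ⟨φ, hφs₀, hφW⟩ := Submodule.exists_dual_map_eq_bot_of_notMem hs₀W inferInstance
    refine ⟨φ, fun s hs => ?_⟩
    have hφs : φ (s₀ + s) = 0 :=
      LinearMap.le_ker_iff_map.mpr hφW (Submodule.subset_span ⟨s, hs, rfl⟩)
    have h1 : φ s₀ = 1 := (zmod_two_eq_zero_or_one _).resolve_left hφs₀
    rw [map_add, h1] at hφs
    exact (eq_neg_of_add_eq_zero_right hφs).trans (by decide)
  · rintro ⟨φ, hφ⟩ k hk x hxS hx
    have := congrArg φ hx
    rw [map_sum, map_zero, Finset.sum_congr rfl fun i _ => hφ _ (hxS i)] at this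
    simp [ZMod.natCast_eq_one_iff_odd.mpr hk] at this

end OddSums

theorem ocf_iff_exists_dotp_eq_one {n : ℕ} (g : V n → ℝ) :
    OCF g ↔ ∃ β : V n, ∀ x, g x = 1 → dotp β x = 1 := by
  have hOCF : OCF g ↔ ∀ k, Odd k → ∀ x : Fin k → V n,
      (∀ i, x i ∈ {y | g y = 1}) → ∑ i, x i ≠ 0 := by
    simp only [OCF, not_exists, not_and, Set.mem_ofPred_eq]
  rw [hOCF, odd_sum_ne_zero_iff_exists_dual_eq_one,
    ← (dotProductEquiv (ZMod 2) (Fin n)).exists_congr_right]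
  rfl

lemma fhat_add_fhat_zero {n : ℕ} {f : V n → ℝ} (hf : IsBool f) (β : V n) :
    fhat f β + fhat f 0 =
      2 * (#{x | f x = 1 ∧ dotp β x = 0} : ℝ) / 2 ^ n := by
  have hterm : ∀ x, f x * (-1 : ℝ) ^ (dotp β x).val + f x * (-1 : ℝ) ^ (dotp 0 x).val
      = if f x = 1 ∧ dotp β x = 0 then 2 else 0 := by
    intro x
    have h0 : dotp 0 x = 0 := by simp [dotp]
    rcases hf x with h | h <;> rcases zmod_two_eq_zero_or_one (dotp β x) with hb | hb <;>
      simp [h, hb, h0, ZMod.val_one, one_add_one_eq_two]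
  rw [fhat, fhat, ← add_div, ← sum_add_distrib, sum_congr rfl fun x _ => hterm x,
    ← sum_filter, sum_const, nsmul_eq_mul, mul_comm]

lemma two_mul_le_fhat_add_fhat_zero_iff {n : ℕ} {f : V n → ℝ} (hf : IsBool f) (β : V n)
    (ε : ℝ) : 2 * ε ≤ fhat f β + fhat f 0 ↔ ε * 2 ^ n ≤ #{x | f x = 1 ∧ dotp β x = 0} := by
  rw [fhat_add_fhat_zero hf, le_div_iff₀ (by positivity), mul_assoc]
  exact mul_le_mul_iff_right₀ two_pos

theorem stmt4 {n : ℕ} (f : V n → ℝ) (hf : IsBool f) (ε : ℝ) :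
    FarFromOCF ε f ↔ ∀ β : V n, fhat f β ≥ - fhat f 0 + 2 * ε := by
  simp only [ge_iff_le, neg_add_le_iff_le_add, add_comm (fhat f 0),
    two_mul_le_fhat_add_fhat_zero_iff hf]
  constructor
  · intro hfar β
    let g : V n → ℝ := fun x => if dotp β x = 1 then f x else 0
    have hg : IsBool g := fun x => by by_cases h : dotp β x = 1 <;> simp [g, h, hf x]
    have hgOCF : OCF g := (ocf_iff_exists_dotp_eq_one g).mpr
      ⟨β, fun x hx => by by_contra h; simp [g, h] at hx⟩
    convert hfar g hg hgOCF using 4 with x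
    rcases zmod_two_eq_zero_or_one (dotp β x) with hb | hb <;> rcases hf x with h | h <;>
      simp [g, hb, h]
  · intro h g hg hgOCF
    obtain ⟨β, hβ⟩ := (ocf_iff_exists_dotp_eq_one g).mp hgOCF
    refine (h β).trans (Nat.cast_le.mpr (card_le_card fun x hx => ?_))
    simp only [mem_filter, mem_univ, true_and] at hx ⊢
    rcases hg x with hgx | hgx
    · simp [hx.1, hgx]
    · simp [hβ x hgx] at hx
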